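/- Under Foata's fundamental transformation mapping π to σ, for q ≥ 1 the number of adjacent q-cycles (i, i+1, ..., i+q-1) in the cycle decomposition of π equals the number of occurrences of the mesh pattern r_q in σ plus the number of occurrences of the mesh pattern s_q in σ. -/

import Mathlib

open Classical in
/-- The one-line word of Foata's fundamental transformation: write each cycle of `π`
with its smallest element first, sort the cycles in descending order of their first
elements, and erase the parentheses. -/
noncomputable def foataWord {n : ℕ} (π : Equiv.Perm (Fin n)) : List (Fin n) :=
  (((List.finRange n).filter (fun m => decide (∀ k : ℕ, m ≤ (π ^ k) m))).reverse).flatMap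
    (fun m => (List.range (Function.minimalPeriod (⇑π) m)).map (fun k => (π ^ k) m))

/-- Foata's fundamental transformation as a map on permutations. -/
noncomputable def foataPerm {n : ℕ} (π : Equiv.Perm (Fin n)) : Equiv.Perm (Fin n) :=
  if h : ∃ σ : Equiv.Perm (Fin n), List.ofFn ⇑σ = foataWord π then h.choose else 1

/-- `IsAdjCycle q π i` says that (in 0-indexed terms) the cycle
`(i, i+1, …, i+q-1)` occurs in the disjoint cycle decomposition of `π`. -/
def IsAdjCycle {n : ℕ} (q : ℕ) (π : Equiv.Perm (Fin n)) (i : ℕ) : Prop :=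
  i + q ≤ n ∧
  (∀ j : Fin n, i ≤ (j : ℕ) → (j : ℕ) + 1 < i + q → ((π j : ℕ) = (j : ℕ) + 1)) ∧
  (∀ j : Fin n, (j : ℕ) = i + q - 1 → (π j : ℕ) = i)

/-- An occurrence of the mesh pattern `r_q` in `σ`: the final `q` positions of `σ`
carry the `q` smallest values in increasing order, the first of them being a
left-to-right minimum. -/
def OccR {n : ℕ} (q : ℕ) (σ : Equiv.Perm (Fin n)) (j : Fin n) : Prop :=
  (j : ℕ) + q = n ∧
  (∀ t, t < q → ∀ l : Fin n, (l : ℕ) = (j : ℕ) + t → (σ l : ℕ) = t) ∧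
  (∀ l, l < j → σ j < σ l)

/-- An occurrence of the mesh pattern `s_q` in `σ`: `q + 1` consecutive positions
`j, j+1, …, j+q` whose first `q` values are increasing and whose last value is the
smallest, such that every entry before position `j` is larger than all the chosen
values and no entry after position `j+q` has value strictly between the first and the
`q`-th chosen value (the shading conditions of `s_q`). -/
def OccS {n : ℕ} (q : ℕ) (σ : Equiv.Perm (Fin n)) (j : Fin n) : Prop :=
  (j : ℕ) + q < n ∧
  (∀ t, t + 1 < q → ∀ l l' : Fin n,
      (l : ℕ) = (j : ℕ) + t → (l' : ℕ) = (j : ℕ) + t + 1 → σ l < σ l') ∧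
  (∀ l l' : Fin n, (l : ℕ) = (j : ℕ) + q → (l' : ℕ) = (j : ℕ) → σ l < σ l') ∧
  (∀ l : Fin n, (l : ℕ) < (j : ℕ) →
      ∀ m : Fin n, (m : ℕ) = (j : ℕ) + q - 1 → σ m < σ l) ∧
  (∀ l : Fin n, (j : ℕ) + q < (l : ℕ) →
      ∀ m0 mq : Fin n, (m0 : ℕ) = (j : ℕ) → (mq : ℕ) = (j : ℕ) + q - 1 →
        ¬ (σ m0 < σ l ∧ σ l < σ mq))

/-!
In the Foata word `σ` of `π` every cycle is a block of consecutive entries headed by its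
minimum, and the block heads are exactly the left-to-right minima of `σ`. Hence an adjacent
cycle `(i, …, i+q-1)` becomes a run `IsRun σ q j`: a left-to-right minimum `σ j = i` followed by
the values `i+1, …, i+q-1` and then by a left-to-right minimum or by the end of `σ`. Conversely
the block headed by such a run is a cycle of length exactly `q`: a shorter cycle would put a
left-to-right minimum inside the run, a longer one could not be followed by a smaller entry.
A run is an occurrence of `r_q` when `i = 0` (the block of `0` comes last) and of `s_q`
otherwise; the shading of `s_q` is what forces its `q` increasing values to be consecutive.
-/

open Function

namespace Foata

theorem eq_add_of_lt_succ_of_forall_exists {f : ℕ → ℕ} {q : ℕ}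
    (hstep : ∀ t, t + 1 < q → f t < f (t + 1))
    (hcover : ∀ v, f 0 < v → v < f (q - 1) → ∃ t < q, f t = v) :
    ∀ t < q, f t = f 0 + t := by
  have hmono : StrictMonoOn f (Set.Iic (q - 1)) :=
    strictMonoOn_Iic_of_lt_succ fun t ht => by
      rw [Order.succ_eq_add_one]
      exact hstep t (by omega)
  intro t ht
  induction t with
  | zero => rfl
  | succ t ih =>
    have hft := ih (by omega)
    have hlt := hstep t ht
    -- otherwise the value `f 0 + (t + 1)` is attained strictly between the indices `t` and `t + 1`
    by_contra hne
    have hle : f (t + 1) ≤ f (q - 1) :=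
      hmono.monotoneOn (by simp; omega) (by simp) (by omega)
    obtain ⟨s, hs, hfs⟩ := hcover (f 0 + (t + 1)) (by omega) (by omega)
    have h₁ := (hmono.lt_iff_lt (by simp; omega) (by simp; omega)).1 (show f t < f s by omega)
    have h₂ := (hmono.lt_iff_lt (by simp; omega) (by simp; omega)).1
      (show f s < f (t + 1) by omega)
    omega

section Cycles

variable {α : Type*} (π : Equiv.Perm α)

noncomputable def cycleBlock (m : α) : List α :=
  (List.range (minimalPeriod π m)).map fun k => (π ^ k) m

def IsCycleMin [LinearOrder α] (m : α) : Prop := ∀ k : ℕ, m ≤ (π ^ k) m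

theorem minimalPeriod_pos [Finite α] (x : α) : 0 < minimalPeriod π x :=
  minimalPeriod_pos_of_mem_periodicPts (π.injective.mem_periodicPts x)

theorem pow_minimalPeriod_apply (x : α) : (π ^ minimalPeriod π x) x = x :=
  iterate_minimalPeriod

theorem pow_mod_minimalPeriod_apply (x : α) (k : ℕ) :
    (π ^ (k % minimalPeriod π x)) x = (π ^ k) x :=
  iterate_mod_minimalPeriod_eq

theorem getElem?_cycleBlock {m : α} {t : ℕ} (ht : t < minimalPeriod π m) :
    (cycleBlock π m)[t]? = some ((π ^ t) m) := by
  simp [cycleBlock, ht]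

theorem head?_cycleBlock [Finite α] (m : α) : (cycleBlock π m).head? = some m := by
  rw [List.head?_eq_getElem?, getElem?_cycleBlock π (minimalPeriod_pos π m)]
  rfl

theorem nodup_cycleBlock (m : α) : (cycleBlock π m).Nodup :=
  List.nodup_range.map_on fun _ ha _ hb h =>
    iterate_injOn_Iio_minimalPeriod (List.mem_range.1 ha) (List.mem_range.1 hb) h

theorem length_cycleBlock (m : α) : (cycleBlock π m).length = minimalPeriod π m := by
  simp [cycleBlock]

theorem exists_lt_minimalPeriod_of_sameCycle [Finite α] {m x : α} (h : π.SameCycle m x) :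
    ∃ t < minimalPeriod π m, (π ^ t) m = x := by
  obtain ⟨k, rfl⟩ := h.exists_nat_pow_eq
  exact ⟨_, Nat.mod_lt k (minimalPeriod_pos π m), pow_mod_minimalPeriod_apply π m k⟩

theorem mem_cycleBlock [Finite α] {m x : α} : x ∈ cycleBlock π m ↔ π.SameCycle m x := by
  refine ⟨?_, fun h => ?_⟩
  · simp only [cycleBlock, List.mem_map]
    rintro ⟨t, -, rfl⟩
    exact Equiv.Perm.sameCycle_pow_right.2 (.refl _ _)
  · obtain ⟨t, ht, rfl⟩ := exists_lt_minimalPeriod_of_sameCycle π h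
    exact List.mem_map.2 ⟨t, List.mem_range.2 ht, rfl⟩

variable [LinearOrder α] [Finite α]

theorem isCycleMin_iff {m : α} :
    IsCycleMin π m ↔ ∀ t < minimalPeriod π m, m ≤ (π ^ t) m :=
  ⟨fun h t _ => h t, fun h k =>
    pow_mod_minimalPeriod_apply π m k ▸ h _ (Nat.mod_lt _ (minimalPeriod_pos π m))⟩

theorem exists_isCycleMin_sameCycle (x : α) : ∃ m, IsCycleMin π m ∧ π.SameCycle m x := by
  obtain ⟨m, hxm, hmin⟩ :=
    (Set.toFinite {y | π.SameCycle x y}).exists_minimal ⟨x, .refl _ _⟩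
  refine ⟨m, fun k => (le_total m _).elim id fun h => hmin ?_ h, hxm.symm⟩
  exact hxm.trans (Equiv.Perm.sameCycle_pow_right.2 (.refl _ _))

variable {π}

theorem IsCycleMin.le_of_sameCycle {m y : α} (hm : IsCycleMin π m) (h : π.SameCycle m y) :
    m ≤ y := by
  obtain ⟨k, rfl⟩ := h.exists_nat_pow_eq
  exact hm k

theorem IsCycleMin.eq_of_sameCycle {m m' : α} (hm : IsCycleMin π m) (hm' : IsCycleMin π m')
    (h : π.SameCycle m m') : m = m' :=
  (hm.le_of_sameCycle h).antisymm (hm'.le_of_sameCycle h.symm)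

theorem IsCycleMin.eq_zero_of_isCycleMin_pow_apply {m : α} {t : ℕ} (hm : IsCycleMin π m)
    (ht : t < minimalPeriod π m) (hmt : IsCycleMin π ((π ^ t) m)) : t = 0 :=
  IsPeriodicPt.eq_zero_of_lt_minimalPeriod
    (hm.eq_of_sameCycle hmt (Equiv.Perm.sameCycle_pow_right.2 (.refl _ _))).symm ht

end Cycles

section FoataWord

variable {n : ℕ} (π : Equiv.Perm (Fin n))

open Classical in
noncomputable def cycleMins : List (Fin n) :=
  (List.finRange n).filter fun m => decide (IsCycleMin π m)

theorem foataWord_eq : foataWord π = (cycleMins π).reverse.flatMap (cycleBlock π) := rfl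

theorem mem_cycleMins {m : Fin n} : m ∈ (cycleMins π).reverse ↔ IsCycleMin π m := by
  simp [cycleMins]

theorem pairwise_gt_cycleMins : (cycleMins π).reverse.Pairwise (· > ·) :=
  List.pairwise_reverse.2 ((List.pairwise_lt_finRange n).filter _)

theorem nodup_foataWord : (foataWord π).Nodup := by
  rw [foataWord_eq, List.nodup_flatMap]
  refine ⟨fun m _ => nodup_cycleBlock π m, ?_⟩
  refine (pairwise_gt_cycleMins π).imp_of_mem fun hm hm' hlt => ?_
  refine List.disjoint_left.2 fun _ hx hx' => hlt.ne' ?_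
  exact ((mem_cycleMins π).1 hm).eq_of_sameCycle ((mem_cycleMins π).1 hm')
    (((mem_cycleBlock π).1 hx).trans ((mem_cycleBlock π).1 hx').symm)

theorem mem_foataWord (x : Fin n) : x ∈ foataWord π := by
  obtain ⟨m, hm, hmx⟩ := exists_isCycleMin_sameCycle π x
  rw [foataWord_eq]
  exact List.mem_flatMap.2 ⟨m, (mem_cycleMins π).2 hm, (mem_cycleBlock π).2 hmx⟩

theorem exists_ofFn_eq_foataWord : ∃ σ : Equiv.Perm (Fin n), List.ofFn σ = foataWord π := by
  let e := List.Nodup.getEquivOfForallMemList _ (nodup_foataWord π) (mem_foataWord π)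
  have hlen : (foataWord π).length = n := by simpa using Fintype.card_congr e
  refine ⟨(finCongr hlen.symm).trans e, List.ext_getElem (by simp [hlen]) fun i _ _ => ?_⟩
  simp [e, List.Nodup.getEquivOfForallMemList]

theorem ofFn_foataPerm : List.ofFn (foataPerm π) = foataWord π := by
  rw [foataPerm, dif_pos (exists_ofFn_eq_foataWord π)]
  exact (exists_ofFn_eq_foataWord π).choose_spec

theorem pairwise_foataWord : (foataWord π).Pairwise fun x y => IsCycleMin π y → y < x := by
  rw [foataWord_eq, List.pairwise_flatMap]
  refine ⟨fun m hm => ?_, ?_⟩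
  · rw [cycleBlock, List.pairwise_map]
    refine List.pairwise_lt_range.imp_of_mem fun _ ht hst hmt => ?_
    have := ((mem_cycleMins π).1 hm).eq_zero_of_isCycleMin_pow_apply (List.mem_range.1 ht) hmt
    omega
  · refine (pairwise_gt_cycleMins π).imp_of_mem fun hm hm' hlt x hx y hy hy' => ?_
    obtain rfl := ((mem_cycleMins π).1 hm').eq_of_sameCycle hy' ((mem_cycleBlock π).1 hy)
    exact hlt.trans_le (((mem_cycleMins π).1 hm).le_of_sameCycle ((mem_cycleBlock π).1 hx))

theorem exists_foataWord_eq_append {m : Fin n} (hm : IsCycleMin π m) :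
    ∃ u v, foataWord π = u ++ cycleBlock π m ++ v ∧ ∀ y ∈ v.head?, IsCycleMin π y := by
  obtain ⟨L₁, L₂, hL⟩ := List.append_of_mem ((mem_cycleMins π).2 hm)
  refine ⟨L₁.flatMap (cycleBlock π), L₂.flatMap (cycleBlock π),
    by simp [foataWord_eq, hL], ?_⟩
  cases L₂ with
  | nil => simp
  | cons m' L₂ =>
    intro y hy
    simp only [List.flatMap_cons, List.head?_append, head?_cycleBlock, Option.some_or,
      Option.mem_def, Option.some.injEq] at hy
    exact hy ▸ (mem_cycleMins π).1 (by simp [hL])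

end FoataWord

section FoataPerm

variable {n : ℕ} {π σ : Equiv.Perm (Fin n)}

theorem getElem?_ofFn_eq_some_iff {k : ℕ} {j : Fin n} :
    (List.ofFn σ)[k]? = some (σ j) ↔ k = j := by
  rw [List.getElem?_ofFn]
  split_ifs with hk
  · simp [σ.injective.eq_iff, Fin.ext_iff]
  · exact iff_of_false (by simp) fun h => hk (by omega)

theorem getElem?_ofFn_add (hw : List.ofFn σ = foataWord π) {j : Fin n}
    (hm : IsCycleMin π (σ j)) :
    (∀ t < minimalPeriod π (σ j), (List.ofFn σ)[j + t]? = some ((π ^ t) (σ j))) ∧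
      ∀ y ∈ (List.ofFn σ)[j + minimalPeriod π (σ j)]?, IsCycleMin π y := by
  obtain ⟨u, v, huv, hv⟩ := exists_foataWord_eq_append π hm
  rw [← hw, List.append_assoc] at huv
  have hblock : ∀ t < minimalPeriod π (σ j),
      (List.ofFn σ)[u.length + t]? = some ((π ^ t) (σ j)) := fun t ht => by
    rw [huv, List.getElem?_append_right (by omega), Nat.add_sub_cancel_left,
      List.getElem?_append_left (by rwa [length_cycleBlock]), getElem?_cycleBlock π ht]
  have hj : (j : ℕ) = u.length :=
    (getElem?_ofFn_eq_some_iff (σ := σ) |>.1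
      (by simpa using hblock 0 (minimalPeriod_pos π _))).symm
  refine ⟨hj ▸ hblock, fun y hy => hv y ?_⟩
  rwa [hj, huv, List.getElem?_append_right (by omega), Nat.add_sub_cancel_left,
    List.getElem?_append_right (by rw [length_cycleBlock]), length_cycleBlock, Nat.sub_self,
    ← List.head?_eq_getElem?] at hy

theorem exists_apply_eq_pow_apply (hw : List.ofFn σ = foataWord π) {j : Fin n}
    (hm : IsCycleMin π (σ j)) {t : ℕ} (ht : t < minimalPeriod π (σ j)) :
    ∃ l : Fin n, (l : ℕ) = j + t ∧ σ l = (π ^ t) (σ j) := by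
  have h := (getElem?_ofFn_add hw hm).1 t ht
  rw [List.getElem?_ofFn] at h
  split_ifs at h with hlt
  exact ⟨⟨j + t, hlt⟩, rfl, Option.some_injective _ h⟩

theorem isCycleMin_apply_of_val_eq (hw : List.ofFn σ = foataWord π) {j l : Fin n}
    (hm : IsCycleMin π (σ j)) (hl : (l : ℕ) = j + minimalPeriod π (σ j)) :
    IsCycleMin π (σ l) :=
  (getElem?_ofFn_add hw hm).2 _ (by simp [← hl])

theorem lt_of_lt_of_isCycleMin (hw : List.ofFn σ = foataWord π) {l l' : Fin n} (hl : l < l')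
    (hm : IsCycleMin π (σ l')) : σ l' < σ l := by
  have h := pairwise_foataWord π
  rw [← hw, List.pairwise_ofFn] at h
  exact h hl hm

theorem isCycleMin_of_forall_lt (hw : List.ofFn σ = foataWord π) {j : Fin n}
    (h : ∀ l < j, σ j < σ l) : IsCycleMin π (σ j) := by
  obtain ⟨m, hm, hmx⟩ := exists_isCycleMin_sameCycle π (σ j)
  obtain ⟨j₀, rfl⟩ := σ.surjective m
  rcases lt_trichotomy j₀ j with hlt | rfl | hgt
  · exact absurd (hm.le_of_sameCycle hmx) (h j₀ hlt).not_ge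
  · exact hm
  · -- `σ j` lies in the block headed by its cycle minimum, which starts after `j`
    obtain ⟨t, ht, hσ⟩ := exists_lt_minimalPeriod_of_sameCycle π hmx
    obtain ⟨l, hl, hσl⟩ := exists_apply_eq_pow_apply hw hm ht
    obtain rfl := σ.injective (hσl.trans hσ)
    rw [Fin.lt_def] at hgt
    omega

end FoataPerm

theorem isAdjCycle_iff {n q : ℕ} (hq : 1 ≤ q) (π : Equiv.Perm (Fin n)) (x : Fin n) :
    IsAdjCycle q π x ↔ minimalPeriod π x = q ∧ ∀ t < q, ((π ^ t) x : ℕ) = x + t := by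
  constructor
  · rintro ⟨-, hsucc, hlast⟩
    have hval : ∀ t < q, ((π ^ t) x : ℕ) = x + t := by
      intro t ht
      induction t with
      | zero => simp
      | succ t ih =>
        rw [pow_succ', Equiv.Perm.mul_apply, hsucc _ (by omega) (by omega), ih (by omega)]
        rfl
    have hper : IsPeriodicPt π q x := by
      obtain ⟨k, rfl⟩ : ∃ k, q = k + 1 := ⟨q - 1, by omega⟩
      show (π ^ (k + 1)) x = x
      rw [pow_succ', Equiv.Perm.mul_apply]
      exact Fin.ext (hlast _ (by rw [hval k (by omega)]; omega))
    refine ⟨(hper.minimalPeriod_le (by omega)).antisymm (not_lt.1 fun hlt => ?_), hval⟩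
    have := hval _ hlt
    rw [pow_minimalPeriod_apply] at this
    have := minimalPeriod_pos π x
    omega
  · rintro ⟨hp, hval⟩
    have hx : ∀ y : Fin n, (x : ℕ) ≤ y → (y : ℕ) < x + q → (π ^ (y - x : ℕ)) x = y :=
      fun y h₁ h₂ => Fin.ext (by rw [hval _ (by omega)]; omega)
    refine ⟨?_, fun y h₁ h₂ => ?_, fun y hy => ?_⟩
    · have := hval (q - 1) (by omega)
      have := ((π ^ (q - 1)) x).2
      omega
    · have := hval (y - x + 1) (by omega)
      rw [pow_succ', Equiv.Perm.mul_apply, hx y h₁ (by omega)] at this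
      omega
    · have h := pow_minimalPeriod_apply π x
      rw [hp, show q = y - x + 1 by omega, pow_succ', Equiv.Perm.mul_apply,
        hx y (by omega) (by omega)] at h
      rw [h]

def IsRun {n : ℕ} (σ : Equiv.Perm (Fin n)) (q : ℕ) (j : Fin n) : Prop :=
  (∀ l < j, σ j < σ l) ∧ (j : ℕ) + q ≤ n ∧
    (∀ l : Fin n, (j : ℕ) ≤ l → (l : ℕ) < j + q → (σ l : ℕ) = σ j + (l - j)) ∧
    ∀ l : Fin n, (l : ℕ) = j + q → σ l < σ j

theorem minimalPeriod_eq_of_isRun {n q : ℕ} {π σ : Equiv.Perm (Fin n)}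
    (hw : List.ofFn σ = foataWord π) {j : Fin n} (h : IsRun σ q j) :
    minimalPeriod π (σ j) = q := by
  obtain ⟨hlr, hle, hval, hnext⟩ := h
  have hm := isCycleMin_of_forall_lt hw hlr
  rcases lt_trichotomy (minimalPeriod π (σ j)) q with hlt | heq | hgt
  · have hp₀ := minimalPeriod_pos π (σ j)
    let l : Fin n := ⟨j + minimalPeriod π (σ j), by omega⟩
    have h₁ := lt_of_lt_of_isCycleMin hw (show j < l from Fin.lt_def.2 (by simp [l]; omega))
      (isCycleMin_apply_of_val_eq hw hm rfl)
    have h₂ := hval l (by simp [l]) (by simp [l]; omega)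
    rw [Fin.lt_def] at h₁
    omega
  · exact heq
  · obtain ⟨l, hl, hσl⟩ := exists_apply_eq_pow_apply hw hm hgt
    exact absurd (hσl ▸ hnext l hl) (hm q).not_gt

theorem isRun_iff_isAdjCycle {n q : ℕ} {π σ : Equiv.Perm (Fin n)}
    (hw : List.ofFn σ = foataWord π) (hq : 1 ≤ q) (j : Fin n) :
    IsRun σ q j ↔ IsAdjCycle q π (σ j) := by
  rw [isAdjCycle_iff hq]
  constructor
  · intro h
    have hm := isCycleMin_of_forall_lt hw h.1
    have hp := minimalPeriod_eq_of_isRun hw h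
    refine ⟨hp, fun t ht => ?_⟩
    obtain ⟨l, hl, hσl⟩ := exists_apply_eq_pow_apply hw hm (hp.symm ▸ ht)
    rw [← hσl, h.2.2.1 l (by omega) (by omega)]
    omega
  · rintro ⟨hp, hval⟩
    have hm : IsCycleMin π (σ j) :=
      (isCycleMin_iff π).2 fun t ht => Fin.le_def.2 (by rw [hval t (hp ▸ ht)]; omega)
    have hσ : ∀ t < q, ∃ l : Fin n, (l : ℕ) = j + t ∧ σ l = (π ^ t) (σ j) :=
      fun t ht => exists_apply_eq_pow_apply hw hm (hp.symm ▸ ht)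
    refine ⟨fun l hl => lt_of_lt_of_isCycleMin hw hl hm, ?_, fun l h₁ h₂ => ?_,
      fun l hl => ?_⟩
    · obtain ⟨l, hl, -⟩ := hσ (q - 1) (by omega)
      have := l.2
      omega
    · obtain ⟨l', hl', hσl'⟩ := hσ (l - j) (by omega)
      obtain rfl : l' = l := Fin.ext (by omega)
      rw [hσl', hval _ (by omega)]
    · exact lt_of_lt_of_isCycleMin hw (Fin.lt_def.2 (by omega))
        (isCycleMin_apply_of_val_eq hw hm (hp ▸ hl))

section Patterns

variable {n q : ℕ} {σ : Equiv.Perm (Fin n)} {j : Fin n}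

theorem IsRun.lt_or_add_le (h : IsRun σ q j) {l : Fin n} (hl : (l : ℕ) < j ∨ j + q ≤ l) :
    (σ l : ℕ) < σ j ∨ (σ j : ℕ) + q ≤ σ l := by
  by_contra! hc
  let l' : Fin n := ⟨j + (σ l - σ j), by have := h.2.1; omega⟩
  have hl' := h.2.2.1 l' (by simp [l']) (by simp [l']; omega)
  have := congrArg Fin.val (σ.injective (Fin.ext (by simp only [l'] at hl' ⊢; omega)) : l' = l)
  simp only [l'] at this
  omega

theorem occR_iff : OccR q σ j ↔ IsRun σ q j ∧ (σ j : ℕ) = 0 := by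
  constructor
  · rintro ⟨hn, hval, hlr⟩
    have h₀ : (σ j : ℕ) = 0 := hval 0 (by omega) j (by simp)
    refine ⟨⟨hlr, hn.le, fun l h₁ h₂ => ?_, fun l hl => absurd l.2 (by omega)⟩, h₀⟩
    rw [h₀, hval (l - j) (by omega) l (by omega)]
    omega
  · rintro ⟨⟨hlr, hle, hval, hnext⟩, h₀⟩
    have hn : (j : ℕ) + q = n := by
      refine hle.antisymm (not_lt.1 fun hlt => ?_)
      have := hnext ⟨j + q, hlt⟩ rfl
      rw [Fin.lt_def] at this
      omega
    refine ⟨hn, fun t ht l hl => ?_, hlr⟩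
    rw [hval l (by omega) (by omega), h₀]
    omega

theorem IsRun.occS (h : IsRun σ q j) (hq : 1 ≤ q) (h₀ : (σ j : ℕ) ≠ 0) : OccS q σ j := by
  have ⟨hlr, hle, hval, hnext⟩ := h
  have hlast : ∀ m : Fin n, (m : ℕ) = j + q - 1 → (σ m : ℕ) = σ j + (q - 1) :=
    fun m hm => by rw [hval m (by omega) (by omega)]; omega
  refine ⟨hle.lt_of_ne fun hn => ?_, fun t ht l l' hl hl' => ?_, fun l l' hl hl' => ?_,
    fun l hl m hm => ?_, fun l hl m₀ mq hm₀ hmq => ?_⟩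
  · -- otherwise no position would carry the value `0`
    obtain ⟨l, hl⟩ := σ.surjective ⟨0, by omega⟩
    have hl₀ : (σ l : ℕ) = 0 := by rw [hl]
    rcases lt_or_ge (l : ℕ) j with hlj | hlj
    · have := Fin.lt_def.1 (hlr l (Fin.lt_def.2 hlj))
      omega
    · have := hval l hlj (by omega)
      omega
  · rw [Fin.lt_def, hval l (by omega) (by omega), hval l' (by omega) (by omega)]
    omega
  · exact (Fin.ext hl' : l' = j) ▸ hnext l hl
  · have h₁ := Fin.lt_def.1 (hlr l (Fin.lt_def.2 hl))
    have h₂ := h.lt_or_add_le (Or.inl hl)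
    rw [Fin.lt_def, hlast m hm]
    omega
  · rintro ⟨h₁, h₂⟩
    rw [Fin.lt_def, (Fin.ext hm₀ : m₀ = j)] at h₁
    rw [Fin.lt_def, hlast mq hmq] at h₂
    have := h.lt_or_add_le (Or.inr hl.le)
    omega

theorem val_apply_of_occS (h : OccS q σ j) {l : Fin n} (h₁ : (j : ℕ) ≤ l)
    (h₂ : (l : ℕ) < j + q) : (σ l : ℕ) = σ j + (l - j) := by
  obtain ⟨hlt, hinc, hdrop, hbefore, hafter⟩ := h
  let f : ℕ → ℕ := fun t => if ht : (j : ℕ) + t < n then σ ⟨j + t, ht⟩ else 0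
  have hf : ∀ l : Fin n, (j : ℕ) ≤ l → f (l - j) = σ l := fun l hl => by
    simp only [f, dif_pos (show (j : ℕ) + (l - j) < n by omega)]
    congr 3
    omega
  let last : Fin n := ⟨j + q - 1, by omega⟩
  have hf₀ : f 0 = σ j := by simpa using hf j le_rfl
  have hf_last : f (q - 1) = σ last := by
    rw [← hf last (show (j : ℕ) ≤ j + q - 1 by omega)]
    congr 1
    show q - 1 = j + q - 1 - j
    omega
  have hstep : ∀ t, t + 1 < q → f t < f (t + 1) := fun t ht => by
    have := hinc t ht ⟨j + t, by omega⟩ ⟨j + t + 1, by omega⟩ rfl rfl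
    simp only [f, dif_pos (show (j : ℕ) + t < n by omega),
      dif_pos (show (j : ℕ) + (t + 1) < n by omega)]
    exact this
  -- the shading of `s_q` leaves no room outside the window for a value between its ends
  have hcover : ∀ v, f 0 < v → v < f (q - 1) → ∃ t < q, f t = v := by
    intro v h₁ h₂
    obtain ⟨l, hl⟩ := σ.surjective ⟨v, by have := (σ last).2; omega⟩
    have hlv : (σ l : ℕ) = v := by rw [hl]
    rw [hf₀] at h₁
    rw [hf_last] at h₂
    have hjl : (j : ℕ) ≤ l ∧ (l : ℕ) < j + q := by
      refine ⟨not_lt.1 fun hl' => ?_, not_le.1 fun hl' => ?_⟩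
      · have := Fin.lt_def.1 (hbefore l hl' last rfl)
        omega
      · rcases hl'.eq_or_lt with heq | hgt
        · have := Fin.lt_def.1 (hdrop l j heq.symm rfl)
          omega
        · exact hafter l hgt j last rfl rfl ⟨Fin.lt_def.2 (by omega), Fin.lt_def.2 (by omega)⟩
    exact ⟨l - j, by omega, by rw [hf l hjl.1, hlv]⟩
  rw [← hf l h₁, eq_add_of_lt_succ_of_forall_exists hstep hcover _ (by omega), hf₀]

theorem isRun_of_occS (hq : 1 ≤ q) (h : OccS q σ j) : IsRun σ q j := by
  refine ⟨fun l hl => ?_, h.1.le, fun l => val_apply_of_occS h, fun l hl => h.2.2.1 l j hl rfl⟩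
  let last : Fin n := ⟨j + q - 1, by have := h.1; omega⟩
  have h₁ := Fin.lt_def.1 (h.2.2.2.1 l hl last rfl)
  have h₂ := val_apply_of_occS h (l := last) (by simp [last]; omega) (by simp [last]; omega)
  rw [Fin.lt_def]
  omega

theorem occS_iff (hq : 1 ≤ q) : OccS q σ j ↔ IsRun σ q j ∧ (σ j : ℕ) ≠ 0 :=
  ⟨fun h => ⟨isRun_of_occS hq h, fun h₀ => by
    have := Fin.lt_def.1 (h.2.2.1 ⟨j + q, h.1⟩ j rfl rfl)
    omega⟩, fun h => h.1.occS hq h.2⟩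

theorem card_isRun (hq : 1 ≤ q) (σ : Equiv.Perm (Fin n)) :
    Nat.card {j // IsRun σ q j} = Nat.card {j // OccR q σ j} + Nat.card {j // OccS q σ j} := by
  rw [← Nat.card_sum]
  refine Nat.card_congr ((Equiv.sumCompl fun j : {j // IsRun σ q j} => (σ j : ℕ) = 0).symm.trans
    (Equiv.sumCongr ?_ ?_))
  · exact (Equiv.subtypeSubtypeEquivSubtypeInter _ _).trans
      (Equiv.subtypeEquivRight fun _ => occR_iff.symm)
  · exact (Equiv.subtypeSubtypeEquivSubtypeInter _ _).trans
      (Equiv.subtypeEquivRight fun _ => (occS_iff hq).symm)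

end Patterns

theorem card_isAdjCycle {n q : ℕ} {π σ : Equiv.Perm (Fin n)} (hw : List.ofFn σ = foataWord π)
    (hq : 1 ≤ q) : Nat.card {i : ℕ // IsAdjCycle q π i} = Nat.card {j // IsRun σ q j} := by
  refine Nat.card_congr (Equiv.symm ?_)
  refine (Equiv.subtypeEquiv (q := fun x : Fin n => IsAdjCycle q π x) σ
    (isRun_iff_isAdjCycle hw hq)).trans ?_
  refine (Equiv.subtypeEquiv (q := fun i : {i // i < n} => IsAdjCycle q π i)
    Fin.equivSubtype fun _ => Iff.rfl).trans ?_
  exact Equiv.subtypeSubtypeEquivSubtype fun hi => by have := hi.1; omega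

end Foata

/-- Under Foata's fundamental transformation `π ↦ σ`, for `q ≥ 1` the number of
adjacent `q`-cycles of `π` equals the number of occurrences of the mesh pattern `r_q`
in `σ` plus the number of occurrences of the mesh pattern `s_q` in `σ`. -/
theorem foata_adjacent_q_cycles {n : ℕ} (q : ℕ) (hq : 1 ≤ q)
    (π σ : Equiv.Perm (Fin n)) (h : σ = foataPerm π) :
    Nat.card {i : ℕ // IsAdjCycle q π i} =
      Nat.card {j : Fin n // OccR q σ j} + Nat.card {j : Fin n // OccS q σ j} := by
  have hw : List.ofFn σ = foataWord π := h ▸ Foata.ofFn_foataPerm π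
  rw [Foata.card_isAdjCycle hw hq, Foata.card_isRun hq]
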